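/- arXiv:1411.5756 — 7 statements merged into one kernel-verified Lean document; each statement's English description precedes it below -/
import Mathlib

section
/- For all integers k ≥ 0 and a ≥ 0, the alternating sum ∑_{l=0}^{k} (-1)^l * C(k, l) * C(k + l + a, l + a) equals (-1)^k. -/
open Finset

theorem aux1 (k : ℕ) : ∀ c : ℕ,
    ∑ l ∈ range (k+1), (-1:ℤ)^l * (k.choose l) * ((l+c).choose k) = (-1)^k := by
  induction k with
  | zero => intro c; simp
  | succ k ih =>
    intro c
    have pascal : ∀ l : ℕ, (((l+1+c).choose (k+1) : ℤ))
        = ((l+c).choose (k+1) : ℤ) + ((l+c).choose k : ℤ) := by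
      intro l
      have h : l+1+c = (l+c)+1 := by ring
      rw [h, Nat.choose_succ_succ]
      push_cast; ring
    have hBA : (∑ l ∈ range (k+1), (-1:ℤ)^l * (k.choose l) * ((l+1+c).choose (k+1)))
         - (∑ l ∈ range (k+1), (-1:ℤ)^l * (k.choose l) * ((l+c).choose (k+1))) = (-1)^k := by
      rw [← Finset.sum_sub_distrib, ← ih c]
      apply Finset.sum_congr rfl
      intro l _
      rw [pascal l]; ring
    have hAT : (∑ l ∈ range (k+1), (-1:ℤ)^l * (k.choose l) * ((l+c).choose (k+1)))
         = ((c.choose (k+1) : ℤ))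
           - ∑ i ∈ range (k+1), (-1:ℤ)^i * (k.choose (i+1)) * ((i+1+c).choose (k+1)) := by
      rw [Finset.sum_range_succ'
        (f := fun l => (-1:ℤ)^l * (k.choose l) * ((l+c).choose (k+1)))]
      rw [Finset.sum_range_succ
        (f := fun i => (-1:ℤ)^i * (k.choose (i+1)) * ((i+1+c).choose (k+1)))]
      simp only [Nat.choose_succ_self, Nat.cast_zero, mul_zero, zero_mul, add_zero,
        pow_zero, Nat.choose_zero_right, Nat.cast_one, one_mul, zero_add]
      have hneg : ∑ i ∈ range k, (-1:ℤ)^(i+1) * (k.choose (i+1)) * ((i+1+c).choose (k+1))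
          = -∑ i ∈ range k, (-1:ℤ)^i * (k.choose (i+1)) * ((i+1+c).choose (k+1)) := by
        rw [← Finset.sum_neg_distrib]
        exact Finset.sum_congr rfl fun i _ => by ring
      rw [hneg]; ring
    rw [Finset.sum_range_succ'
      (f := fun l => (-1:ℤ)^l * ((k+1).choose l) * ((l+c).choose (k+1)))]
    have hterm : ∀ i : ℕ, (-1:ℤ)^(i+1) * ((k+1).choose (i+1)) * ((i+1+c).choose (k+1))
        = -((-1:ℤ)^i * (k.choose i) * ((i+1+c).choose (k+1)))
          + -((-1:ℤ)^i * (k.choose (i+1)) * ((i+1+c).choose (k+1))) := by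
      intro i
      rw [Nat.choose_succ_succ]
      push_cast; ring
    rw [Finset.sum_congr rfl (fun i _ => hterm i), Finset.sum_add_distrib,
      Finset.sum_neg_distrib, Finset.sum_neg_distrib]
    simp only [pow_zero, Nat.choose_zero_right, Nat.cast_one, one_mul, zero_add]
    rw [pow_succ]
    linarith [hBA, hAT]

theorem stmt1 (k a : ℕ) :
    ∑ l ∈ Finset.range (k + 1),
      (-1 : ℤ) ^ l * (k.choose l) * ((k + l + a).choose (l + a)) = (-1 : ℤ) ^ k := by
  have h : ∀ l : ℕ, (k + l + a).choose (l + a) = (l + (k + a)).choose k := by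
    intro l
    have e : k + l + a = (l + a) + k := by omega
    rw [e, Nat.choose_symm_add]
    congr 1
    omega
  rw [Finset.sum_congr rfl (fun l _ => by rw [h l])]
  exact aux1 k (k + a)
end

section
/- For all integers j ≥ 0, i ≥ 0, and a ≥ 1, the sum ∑_{l=0}^{j} (-1)^l * C(j, l) / ((l + a) * C(l + a + i, i)) equals 1 / (a * C(i + j + a, a)). -/
/-! Write `S j a` for the left-hand side. Pascal's rule `C(j+1, l) = C(j, l) + C(j, l-1)` gives
`S (j+1) a = S j a - S j (a+1)`, and the right-hand side satisfies the same recurrence, so the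
identity follows by induction on `j` for all `a` at once. -/

open Finset

theorem sum_neg_one_pow_mul_choose_succ_mul {R : Type*} [CommRing R] (j : ℕ) (g : ℕ → R) :
    ∑ l ∈ range (j + 1 + 1), (-1 : R) ^ l * (j + 1).choose l * g l =
      ∑ l ∈ range (j + 1), (-1 : R) ^ l * j.choose l * g l -
        ∑ l ∈ range (j + 1), (-1 : R) ^ l * j.choose l * g (l + 1) := by
  have hext : ∑ l ∈ range (j + 1), (-1 : R) ^ l * j.choose l * g l =
      ∑ l ∈ range (j + 2), (-1 : R) ^ l * j.choose l * g l := by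
    simp [sum_range_succ _ (j + 1)]
  rw [hext, sum_range_succ' _ (j + 1), sum_range_succ' _ (j + 1)]
  simp only [Nat.choose_succ_succ', Nat.cast_add, pow_succ, add_mul, mul_add, sum_add_distrib,
    Nat.choose_zero_right, mul_neg_one, neg_mul, sum_neg_distrib]
  ring

theorem one_div_mul_choose_sub_one_div_mul_choose (n a : ℕ) (ha : a ≠ 0) :
    (1 : ℚ) / (a * (n + a).choose a) - 1 / ((a + 1) * (n + a + 1).choose (a + 1)) =
      1 / (a * (n + a + 1).choose a) := by
  have hc := congrArg (Nat.cast : ℕ → ℚ) (Nat.add_one_mul_choose_eq (n + a) a)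
  have hc' := congrArg (Nat.cast : ℕ → ℚ) (Nat.choose_mul_succ_eq (n + a) a)
  rw [show n + a + 1 - a = n + 1 by omega] at hc'
  push_cast at hc hc'
  have : ((n + a).choose a : ℚ) ≠ 0 := by exact_mod_cast (Nat.choose_pos (by omega)).ne'
  have : ((n + a + 1).choose a : ℚ) ≠ 0 := by exact_mod_cast (Nat.choose_pos (by omega)).ne'
  rw [mul_comm (a + 1 : ℚ), ← hc]
  field_simp
  linear_combination -hc'

theorem sum_range_neg_one_pow_mul_choose_mul_one_div (j i a : ℕ) (ha : a ≠ 0) :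
    ∑ l ∈ range (j + 1), (-1 : ℚ) ^ l * j.choose l * (1 / ((l + a) * (l + a + i).choose i)) =
      1 / (a * (i + j + a).choose a) := by
  induction j generalizing a with
  | zero => simp [add_comm i a, Nat.choose_symm_add]
  | succ j ih =>
    have hshift (l : ℕ) : (1 : ℚ) / ((((l + 1 : ℕ) : ℚ) + a) * (l + 1 + a + i).choose i) =
        1 / (((l : ℚ) + (a + 1 : ℕ)) * (l + (a + 1) + i).choose i) := by
      rw [show l + 1 + a + i = l + (a + 1) + i by omega]
      push_cast
      ring
    rw [sum_neg_one_pow_mul_choose_succ_mul j (fun l => 1 / ((l + a : ℚ) * (l + a + i).choose i))]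
    simp only [hshift]
    rw [ih a ha, ih (a + 1) a.succ_ne_zero, show i + (j + 1) + a = i + j + a + 1 by omega,
      show i + j + (a + 1) = i + j + a + 1 by omega]
    push_cast
    exact one_div_mul_choose_sub_one_div_mul_choose (i + j) a ha

theorem stmt2 (j i a : ℕ) (ha : 1 ≤ a) :
    ∑ l ∈ Finset.range (j + 1),
      (-1 : ℚ) ^ l * (j.choose l) / ((l + a) * ((l + a + i).choose i)) =
      1 / (a * ((i + j + a).choose a)) := by
  simpa only [mul_one_div] using sum_range_neg_one_pow_mul_choose_mul_one_div j i a (by omega)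
end

section
/- For all integers j ≥ 0, i ≥ 0, and a ≥ 1, the sum ∑_{l=0}^{j} (-1)^l * C(j, l) / ((l + a) * C(l + a + i, i)) equals (a-1)! / ((i + j + a)(i + j + a - 1)⋯(i + j + 1)), where the denominator is the falling factorial (i + j + a)_a. -/
/-!
The summand is a Beta integral, `1 / ((l + a) * C(l + a + i, i)) = B(l + a, i + 1)`, and the Beta
recurrence `B(a, b) = B(a + 1, b) + B(a, b + 1)` says that a forward difference in the first
argument is minus a shift in the second. Hence the alternating binomial sum, which is `(-1)^j` times
the `j`-th forward difference in `a`, equals `B(a, i + j + 1) = (a - 1)! (i + j)! / (i + j + a)!`.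
-/

open Finset Nat fwdDiff

/-- Euler's Beta function `B(a + 1, b + 1)` at natural arguments. -/
def betaNat (a b : ℕ) : ℚ := a ! * b ! / (a + b + 1)!

theorem betaNat_eq_add (a b : ℕ) : betaNat a b = betaNat (a + 1) b + betaNat a (b + 1) := by
  have hfac : ∀ n : ℕ, (n ! : ℚ) ≠ 0 := fun n => by exact_mod_cast n.factorial_ne_zero
  rw [betaNat, betaNat, betaNat, show a + 1 + b + 1 = a + b + 1 + 1 by ring,
    show a + (b + 1) + 1 = a + b + 1 + 1 by ring]
  simp only [factorial_succ, cast_mul, cast_add, cast_one]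
  field_simp
  ring

theorem fwdDiff_iter_betaNat (b j : ℕ) :
    (Δ_[1])^[j] (fun a => betaNat a b) = fun a => (-1 : ℚ) ^ j * betaNat a (b + j) := by
  induction j with
  | zero => simp
  | succ j ih =>
    funext a
    rw [Function.iterate_succ_apply', ih]
    simp only [fwdDiff]
    rw [betaNat_eq_add a (b + j), ← add_assoc]
    ring

theorem sum_range_neg_one_pow_mul_choose_mul {R : Type*} [CommRing R] (f : ℕ → R) (j a : ℕ) :
    ∑ l ∈ range (j + 1), (-1 : R) ^ l * j.choose l * f (a + l) =
      (-1) ^ j * (Δ_[1])^[j] f a := by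
  rw [fwdDiff_iter_eq_sum_shift, mul_sum]
  refine sum_congr rfl fun l hl => ?_
  obtain ⟨k, rfl⟩ : ∃ k, j = l + k := ⟨j - l, by grind⟩
  rw [Nat.add_sub_cancel_left, zsmul_eq_mul, smul_eq_mul, mul_one]
  push_cast
  have hsq : ((-1 : R) ^ k) ^ 2 = 1 := by rw [pow_right_comm, neg_one_sq, one_pow]
  rw [pow_add]
  linear_combination -(-1 : R) ^ l * ((l + k).choose l) * f (a + l) * hsq

theorem sum_range_neg_one_pow_mul_choose_mul_betaNat (j a b : ℕ) :
    ∑ l ∈ range (j + 1), (-1 : ℚ) ^ l * j.choose l * betaNat (a + l) b =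
      betaNat a (b + j) := by
  rw [sum_range_neg_one_pow_mul_choose_mul (fun n => betaNat n b), fwdDiff_iter_betaNat,
    ← mul_assoc, ← pow_add, Even.neg_one_pow ⟨j, rfl⟩, one_mul]

theorem betaNat_eq_inv (n i : ℕ) :
    betaNat n i = (((n + 1 : ℕ) : ℚ) * (n + 1 + i).choose i)⁻¹ := by
  have h := Nat.add_choose_mul_factorial_mul_factorial (n + 1) i
  rw [factorial_succ] at h
  rw [betaNat, show n + i + 1 = n + 1 + i by ring, ← h]
  have hfac : ∀ m : ℕ, (m ! : ℚ) ≠ 0 := fun m => by exact_mod_cast m.factorial_ne_zero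
  push_cast
  field_simp

theorem betaNat_eq_div_descFactorial (a n : ℕ) :
    betaNat a n = a ! / (n + a + 1).descFactorial (a + 1) := by
  have h := factorial_mul_descFactorial (show a + 1 ≤ n + a + 1 by omega)
  rw [show n + a + 1 - (a + 1) = n by omega] at h
  have hfac : ∀ m : ℕ, (m ! : ℚ) ≠ 0 := fun m => by exact_mod_cast m.factorial_ne_zero
  rw [betaNat, show a + n + 1 = n + a + 1 by ring, ← h]
  push_cast
  field_simp

theorem prod_range_add_sub_eq_descFactorial (n a : ℕ) :
    ∏ m ∈ range a, ((n : ℚ) + a - m) = (n + a).descFactorial a := by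
  rw [descFactorial_eq_prod_range, cast_prod]
  refine prod_congr rfl fun m hm => ?_
  rw [cast_sub (by simp at hm; omega)]
  push_cast
  rfl

theorem stmt3 (j i a : ℕ) (ha : 1 ≤ a) :
    ∑ l ∈ Finset.range (j + 1),
      (-1 : ℚ) ^ l * (j.choose l) / ((l + a) * ((l + a + i).choose i)) =
      (Nat.factorial (a - 1) : ℚ) /
        ∏ m ∈ Finset.range a, ((i : ℚ) + j + a - m) := by
  obtain ⟨a, rfl⟩ : ∃ b, a = b + 1 := ⟨a - 1, by omega⟩
  have hterm (l : ℕ) :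
      (-1 : ℚ) ^ l * j.choose l / ((l + (a + 1 : ℕ)) * (l + (a + 1) + i).choose i) =
        (-1) ^ l * j.choose l * betaNat (a + l) i := by
    rw [betaNat_eq_inv, div_eq_mul_inv, show l + (a + 1) + i = a + l + 1 + i by ring]
    push_cast
    ring_nf
  have hprod : ∏ m ∈ range (a + 1), ((i : ℚ) + j + (a + 1 : ℕ) - m)
      = (i + j + (a + 1)).descFactorial (a + 1) := by
    rw [← prod_range_add_sub_eq_descFactorial]
    push_cast
    ring_nf
  rw [sum_congr rfl fun l _ => hterm l, sum_range_neg_one_pow_mul_choose_mul_betaNat,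
    betaNat_eq_div_descFactorial, hprod, Nat.add_sub_cancel, ← add_assoc]
end

section
/- For all integers i, j with 0 ≤ i < j, the double sum ∑_{k=0}^{i} ∑_{l=0}^{j} (-1)^{k+l} * C(i,k) * C(j,l) * (k+l+4)! / ((k+l+4) * (k+3)! * (l+3)!) equals 0. -/
/-!
Since `(k+l+4)! / ((k+l+4) (k+3)! (l+3)!) = k!/(k+3)! · C(k+3+l, k)`, the inner sum over `l` is,
up to a factor depending only on `k`, the `j`-th forward difference of `l ↦ C(k+3+l, k)`, a
polynomial of degree `k` in `l`. It vanishes because `k ≤ i < j`.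
-/

open Finset Nat fwdDiff

theorem fwdDiff_iter_choose_eq_zero_of_lt {k n : ℕ} (h : k < n) :
    Δ_[1] ^[n] (fun x : ℕ ↦ (x.choose k : ℤ)) = 0 := by
  obtain ⟨r, rfl⟩ := Nat.exists_eq_add_of_lt h
  have hk : Δ_[1] ^[k] (fun x : ℕ ↦ (x.choose k : ℤ)) = fun _ ↦ 1 := by
    simpa using fwdDiff_iter_choose 0 k
  rw [show k + r + 1 = r + 1 + k by ring, Function.iterate_add_apply, hk,
    Function.iterate_succ_apply, fwdDiff_const]
  exact Function.iterate_fixed (fwdDiff_const 1 (0 : ℤ)) r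

theorem sum_range_neg_one_pow_mul_choose_mul_add_choose {k n : ℕ} (h : k < n) (m : ℕ) :
    ∑ l ∈ range (n + 1), (-1 : ℤ) ^ l * n.choose l * (m + l).choose k = 0 := by
  have hdiff := fwdDiff_iter_eq_sum_shift 1 (fun x : ℕ ↦ ((x + m).choose k : ℤ)) n 0
  rw [fwdDiff_iter_comp_add 1 (fun x : ℕ ↦ (x.choose k : ℤ)) m n 0,
    fwdDiff_iter_choose_eq_zero_of_lt h] at hdiff
  have hsign : ∀ l ∈ range (n + 1), (-1 : ℤ) ^ l = (-1) ^ n * (-1) ^ (n - l) := by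
    intro l hl
    obtain ⟨d, rfl⟩ := Nat.exists_eq_add_of_le (mem_range_succ_iff.mp hl)
    rw [Nat.add_sub_cancel_left, pow_add, mul_assoc, ← pow_add, ← two_mul, pow_mul]
    simp
  simp only [zero_add, smul_eq_mul, mul_one, Pi.zero_apply] at hdiff
  rw [sum_congr rfl fun l hl ↦ by rw [hsign l hl, add_comm m, mul_assoc, mul_assoc], ← mul_sum]
  simp only [mul_assoc] at hdiff
  rw [← hdiff, mul_zero]

theorem factorial_add_div_eq_mul_choose {K : Type*} [Field K] [CharZero K] (k l : ℕ) :
    ((k + l + 4)! : K) / ((k + l + 4) * (k + 3)! * (l + 3)!) =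
      k ! / (k + 3)! * ((k + 3 + l).choose k) := by
  rw [show k + 3 + l = k + (l + 3) by ring, Nat.cast_add_choose,
    show k + l + 4 = k + (l + 3) + 1 by ring, Nat.factorial_succ]
  have hkl : (k + l + 4 : K) ≠ 0 := by exact_mod_cast succ_ne_zero (k + l + 3)
  have hk : (k ! : K) ≠ 0 := cast_ne_zero.mpr k.factorial_ne_zero
  push_cast
  field_simp
  ring

theorem stmt7 (i j : ℕ) (hij : i < j) :
    ∑ k ∈ Finset.range (i + 1), ∑ l ∈ Finset.range (j + 1),
      (-1 : ℚ) ^ (k + l) * (i.choose k) * (j.choose l) *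
        (Nat.factorial (k + l + 4)) /
        ((k + l + 4) * (Nat.factorial (k + 3)) * (Nat.factorial (l + 3))) = 0 := by
  refine sum_eq_zero fun k hk ↦ ?_
  have hkj : k < j := (mem_range_succ_iff.mp hk).trans_lt hij
  calc ∑ l ∈ range (j + 1), (-1 : ℚ) ^ (k + l) * (i.choose k) * (j.choose l) *
        (k + l + 4)! / ((k + l + 4) * (k + 3)! * (l + 3)!)
      = (-1) ^ k * i.choose k * (k ! / (k + 3)!) *
          ((∑ l ∈ range (j + 1), (-1 : ℤ) ^ l * j.choose l * (k + 3 + l).choose k : ℤ) : ℚ) := by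
        push_cast
        rw [mul_sum]
        refine sum_congr rfl fun l _ ↦ ?_
        rw [mul_div_assoc, factorial_add_div_eq_mul_choose]
        ring
    _ = 0 := by
        rw [sum_range_neg_one_pow_mul_choose_mul_add_choose hkj, Int.cast_zero, mul_zero]
end

section
/- For all integers j ≥ 0, the double sum ∑_{k=0}^{j} ∑_{l=0}^{j} (-1)^{k+l} * C(j,k) * C(j,l) * (k+l+4)! / ((k+l+4) * (k+3)! * (l+3)!) equals 1 / ((j+3)(j+2)(j+1)). -/
private def Dfun (j k m : ℕ) : ℚ :=
  ∑ l ∈ Finset.range (j + 1), (-1 : ℚ) ^ l * (j.choose l) * ((k + l + m).choose k)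

private lemma Dfun_zero (j m : ℕ) (hj : 1 ≤ j) : Dfun j 0 m = 0 := by
  unfold Dfun
  simp only [Nat.choose_zero_right, Nat.cast_one, mul_one]
  obtain ⟨j, rfl⟩ := Nat.exists_eq_add_of_le hj
  have := Int.alternating_sum_range_choose (n := 1 + j)
  rw [if_neg (by omega)] at this
  have : ((∑ i ∈ Finset.range (1 + j + 1), (-1 : ℤ) ^ i * ((1 + j).choose i) : ℤ) : ℚ) = 0 := by
    rw [this]; norm_num
  push_cast at this
  convert this using 2

private lemma Dfun_rec (j k m : ℕ) : Dfun (j + 1) (k + 1) m = - Dfun j k (m + 1) := by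
  unfold Dfun
  have h1 : ∀ l, ((j + 1).choose l : ℚ) =
      (j.choose l) + (if l = 0 then 0 else (j.choose (l - 1))) := by
    intro l
    cases l with
    | zero => simp
    | succ l => simp [Nat.choose_succ_succ, Nat.cast_add]; ring
  have key : ∑ l ∈ Finset.range (j + 1 + 1),
      (-1 : ℚ) ^ l * ((j+1).choose l) * ((k + 1 + l + m).choose (k+1))
      = (∑ l ∈ Finset.range (j + 1),
          (-1 : ℚ) ^ l * (j.choose l) * ((k + l + m + 1).choose (k+1)))
        - ∑ l ∈ Finset.range (j + 1),
          (-1 : ℚ) ^ l * (j.choose l) * ((k + l + m + 2).choose (k+1)) := by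
    simp only [h1, mul_add, add_mul, Finset.sum_add_distrib]
    rw [sub_eq_add_neg]
    congr 1
    · rw [Finset.sum_range_succ, Nat.choose_succ_self]
      simp only [Nat.cast_zero, zero_mul, mul_zero, add_zero]
      apply Finset.sum_congr rfl
      intro l _
      have : k + 1 + l + m = k + l + m + 1 := by omega
      rw [this]
    · rw [Finset.sum_range_succ']
      simp only [Nat.succ_ne_zero, if_false, Nat.add_sub_cancel, ite_true,
        Nat.cast_zero, zero_mul, mul_zero, pow_zero, one_mul, add_zero]
      rw [← Finset.sum_neg_distrib]
      apply Finset.sum_congr rfl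
      intro l _
      rw [pow_succ]
      have : k + 1 + (l + 1) + m = k + l + m + 2 := by omega
      rw [this]
      ring
  rw [key, ← Finset.sum_neg_distrib, ← Finset.sum_sub_distrib]
  apply Finset.sum_congr rfl
  intro l _
  have hp : (k + l + m + 2).choose (k + 1) = (k+l+m+1).choose k + (k+l+m+1).choose (k+1) :=
    Nat.choose_succ_succ _ _
  have he : k + l + (m + 1) = k + l + m + 1 := by omega
  rw [he, hp]
  push_cast
  ring

private lemma Dfun_lt : ∀ j k m : ℕ, k < j → Dfun j k m = 0 := by
  intro j
  induction j with
  | zero => omega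
  | succ n ih =>
    intro k m hk
    cases k with
    | zero => exact Dfun_zero _ _ (by omega)
    | succ k => rw [Dfun_rec, ih k (m+1) (by omega), neg_zero]

private lemma Dfun_diag : ∀ j m : ℕ, Dfun j j m = (-1 : ℚ) ^ j := by
  intro j
  induction j with
  | zero => intro m; simp [Dfun]
  | succ n ih =>
    intro m
    rw [Dfun_rec, ih (m+1), pow_succ]
    ring

private lemma term_eq (j k l : ℕ) :
    (-1 : ℚ) ^ (k + l) * (j.choose k) * (j.choose l) *
        (Nat.factorial (k + l + 4)) /
        ((k + l + 4) * (Nat.factorial (k + 3)) * (Nat.factorial (l + 3))) =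
    ((-1 : ℚ) ^ k * (j.choose k) / (((k : ℚ) + 1) * ((k : ℚ) + 2) * ((k : ℚ) + 3))) *
      ((-1 : ℚ) ^ l * (j.choose l) * ((k + l + 3).choose k)) := by
  have h1 : (k + l + 3).choose k * Nat.factorial k * Nat.factorial (l + 3)
      = Nat.factorial (k + l + 3) := by
    have := Nat.choose_mul_factorial_mul_factorial (n := k + l + 3) (k := k) (by omega)
    simpa [show k + l + 3 - k = l + 3 by omega] using this
  have h2 : Nat.factorial (k + l + 4) = (k + l + 4) * Nat.factorial (k + l + 3) :=
    Nat.factorial_succ _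
  have h3 : Nat.factorial (k + 3) = (k + 3) * ((k + 2) * ((k + 1) * Nat.factorial k)) := by
    rw [show k + 3 = (k+2) + 1 from rfl, Nat.factorial_succ,
      show k + 2 = (k+1) + 1 from rfl, Nat.factorial_succ,
      show k + 1 = k + 1 from rfl, Nat.factorial_succ]
  have hfk : (Nat.factorial k : ℚ) ≠ 0 := by positivity
  have hfl : (Nat.factorial (l + 3) : ℚ) ≠ 0 := by positivity
  have hk4 : ((k : ℚ) + l + 4) ≠ 0 := by positivity
  rw [h2, h3]
  rw [pow_add]
  have h1' : (((k + l + 3).choose k : ℚ)) * (Nat.factorial k) * (Nat.factorial (l + 3))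
      = (Nat.factorial (k + l + 3) : ℚ) := by exact_mod_cast congrArg (Nat.cast (R := ℚ)) h1
  push_cast
  rw [← h1']
  field_simp

theorem stmt8 (j : ℕ) :
    ∑ k ∈ Finset.range (j + 1), ∑ l ∈ Finset.range (j + 1),
      (-1 : ℚ) ^ (k + l) * (j.choose k) * (j.choose l) *
        (Nat.factorial (k + l + 4)) /
        ((k + l + 4) * (Nat.factorial (k + 3)) * (Nat.factorial (l + 3))) =
      1 / (((j : ℚ) + 3) * (j + 2) * (j + 1)) := by
  have step : ∀ k ∈ Finset.range (j + 1),
      ∑ l ∈ Finset.range (j + 1),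
        (-1 : ℚ) ^ (k + l) * (j.choose k) * (j.choose l) *
          (Nat.factorial (k + l + 4)) /
          ((k + l + 4) * (Nat.factorial (k + 3)) * (Nat.factorial (l + 3)))
      = ((-1 : ℚ) ^ k * (j.choose k) / (((k : ℚ) + 1) * ((k : ℚ) + 2) * ((k : ℚ) + 3)))
          * Dfun j k 3 := by
    intro k _
    rw [Dfun, Finset.mul_sum]
    exact Finset.sum_congr rfl fun l _ => term_eq j k l
  rw [Finset.sum_congr rfl step]
  rw [Finset.sum_eq_single j]
  · rw [Dfun_diag, Nat.choose_self, Nat.cast_one, mul_one, div_mul_eq_mul_div,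
      ← pow_add, Even.neg_one_pow ⟨j, rfl⟩]
    congr 1
    ring
  · intro k hk hkj
    rw [Dfun_lt j k 3 (by simp at hk; omega), mul_zero]
  · intro h
    exact absurd (Finset.self_mem_range_succ j) h
end

section
/- For all integers k ≥ 0 and j ≥ 0, the sum ∑_{l=0}^{j} (-1)^l * C(j,l) * (l+1) / ((l+3)(k+l+4)) equals (k+3) / ((k+1)(k+4) * C(k+j+4, j)) − 2 / (3*(k+1) * C(j+3, j)). -/
/-!
Splitting `(l + 1) / ((l + 3) (k + l + 4))` into partial fractions reduces the sum to two sums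
`∑ (-1)^l C(j, l) / (x + l)`. Such a sum is, up to the sign `(-1)^j`, the `j`-th forward difference
of `t ↦ 1 / t` at `x`, which equals `j! / (x (x + 1) ⋯ (x + j))`; at a positive integer `x = m`
this is `1 / (m C(m + j, j))`.
-/

open Finset Function Nat fwdDiff

section

variable {K : Type*} [Field K]

theorem fwdDiff_iter_inv (j : ℕ) (x : K) (hx : ∀ i ≤ j, x + i ≠ 0) :
    (Δ_[1])^[j] (fun t : K ↦ t⁻¹) x = (-1) ^ j * j ! / ∏ i ∈ range (j + 1), (x + i) := by
  induction j generalizing x with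
  | zero => simp
  | succ j ih =>
    have hx' : ∀ i ≤ j, x + 1 + i ≠ 0 := fun i hi ↦ by
      simpa [add_assoc, add_comm (1 : K)] using hx (i + 1) (by omega)
    have hxj : x + (j + 1) ≠ 0 := by exact_mod_cast hx (j + 1) le_rfl
    have hP : ∏ i ∈ range (j + 1), (x + i) ≠ 0 :=
      prod_ne_zero_iff.2 fun i hi ↦ hx i (by grind)
    have hQ : ∏ i ∈ range (j + 1), (x + 1 + i) ≠ 0 :=
      prod_ne_zero_iff.2 fun i hi ↦ hx' i (by grind)
    have hPQ : (∏ i ∈ range (j + 1), (x + i)) * (x + (j + 1)) =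
        x * ∏ i ∈ range (j + 1), (x + 1 + i) := by
      have := prod_range_succ (fun i : ℕ ↦ x + i) (j + 1)
      rw [prod_range_succ'] at this
      push_cast at this
      simpa [add_assoc, add_comm (1 : K), mul_comm x] using this.symm
    rw [iterate_succ_apply', fwdDiff, ih x fun i hi ↦ hx i (by omega), ih (x + 1) hx',
      prod_range_succ _ (j + 1), factorial_succ]
    push_cast
    field_simp
    linear_combination (-1) ^ j * (j ! : K) * hPQ

theorem sum_neg_one_pow_mul_choose_div (j : ℕ) (x : K) (hx : ∀ i ≤ j, x + i ≠ 0) :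
    ∑ l ∈ range (j + 1), (-1) ^ l * j.choose l / (x + l) =
      j ! / ∏ i ∈ range (j + 1), (x + i) := by
  have hsum := fwdDiff_iter_eq_sum_shift 1 (fun t : K ↦ t⁻¹) j x
  rw [fwdDiff_iter_inv j x hx] at hsum
  calc ∑ l ∈ range (j + 1), (-1) ^ l * j.choose l / (x + l)
      = (-1) ^ j *
          ∑ l ∈ range (j + 1), ((-1 : ℤ) ^ (j - l) * j.choose l) • (x + l • (1 : K))⁻¹ := by
        rw [mul_sum]
        refine sum_congr rfl fun l hl ↦ ?_
        have hsign : (-1 : K) ^ j * (-1) ^ (j - l) = (-1) ^ l := by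
          rw [← pow_add, show j + (j - l) = l + 2 * (j - l) by grind, pow_add, pow_mul,
            neg_one_sq, one_pow, mul_one]
        simp only [zsmul_eq_mul, nsmul_eq_mul, mul_one]
        push_cast
        rw [← mul_assoc, ← mul_assoc, hsign, div_eq_mul_inv]
    _ = j ! / ∏ i ∈ range (j + 1), (x + i) := by
        rw [← hsum, ← mul_div_assoc, ← mul_assoc, ← pow_add, Even.neg_one_pow ⟨j, rfl⟩, one_mul]

theorem sum_neg_one_pow_mul_choose_div_natCast [CharZero K] (m j : ℕ) (hm : 0 < m) :
    ∑ l ∈ range (j + 1), (-1) ^ l * j.choose l / ((m : K) + l) = 1 / (m * (m + j).choose j) := by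
  have hprod : ∏ i ∈ range (j + 1), (m + i) = m * (j ! * (m + j).choose j) := by
    rw [← ascFactorial_eq_prod_range, ascFactorial_succ, ← succ_ascFactorial,
      ascFactorial_eq_factorial_mul_choose]
  have hprod' : ∏ i ∈ range (j + 1), ((m : K) + i) = m * (j ! * (m + j).choose j) := by
    exact_mod_cast hprod
  rw [sum_neg_one_pow_mul_choose_div j (m : K) fun i _ ↦ by exact_mod_cast (by omega : m + i ≠ 0),
    hprod']
  have : (j ! : K) ≠ 0 := Nat.cast_ne_zero.2 (factorial_ne_zero j)
  field_simp

end

theorem stmt9 (k j : ℕ) :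
    ∑ l ∈ Finset.range (j + 1),
      (-1 : ℚ) ^ l * (j.choose l) * (l + 1) / ((l + 3) * (k + l + 4)) =
      ((k : ℚ) + 3) / (((k : ℚ) + 1) * (k + 4) * ((k + j + 4).choose j)) -
        2 / (3 * ((k : ℚ) + 1) * ((j + 3).choose j)) := by
  have hk : (k : ℚ) + 1 ≠ 0 := by positivity
  have partial_fractions (l : ℕ) :
      (-1 : ℚ) ^ l * (j.choose l) * (l + 1) / ((l + 3) * (k + l + 4)) =
        -2 / (k + 1) * ((-1) ^ l * j.choose l / ((3 : ℕ) + l)) +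
          (k + 3) / (k + 1) * ((-1) ^ l * j.choose l / ((k + 4 : ℕ) + l)) := by
    push_cast
    field_simp
    ring
  rw [sum_congr rfl fun l _ ↦ partial_fractions l, sum_add_distrib, ← mul_sum, ← mul_sum,
    sum_neg_one_pow_mul_choose_div_natCast 3 j (by norm_num),
    sum_neg_one_pow_mul_choose_div_natCast (k + 4) j (by omega), add_comm 3 j,
    show k + 4 + j = k + j + 4 by ring]
  push_cast
  field_simp
  ring
end

section
/- For all integers i ≥ 0 and j ≥ 0, the sum ∑_{k=0}^{i} (-1)^k * C(i,k) / ((k+4) * C(k+j+4, j)) equals 6 / ((i+j+4)(i+j+3)(i+j+2)(i+j+1)). -/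
lemma natfact (j n : ℕ) :
    (n+1) * ((n + j + 1).choose j) * j.factorial * n.factorial = (n + j + 1).factorial := by
  have h := Nat.choose_mul_factorial_mul_factorial (show j ≤ n + j + 1 by omega)
  have h2 : n + j + 1 - j = n + 1 := by omega
  rw [h2, Nat.factorial_succ] at h
  rw [← h]; ring

lemma aux (j : ℕ) : ∀ i m : ℕ,
    ∑ k ∈ Finset.range (i + 1),
      (-1 : ℚ) ^ k * (i.choose k) / (((k : ℚ) + m + 4) * ((k + j + m + 4).choose j)) =
      ((m+3).factorial * (i+j).factorial : ℚ) / ((i+j+m+4).factorial) := by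
  intro i
  induction i with
  | zero =>
    intro m
    simp only [Finset.sum_range_one, Nat.choose_self, pow_zero, Nat.cast_one, one_mul,
      Nat.choose_zero_right, Nat.cast_zero, zero_add]
    have h := natfact j (m+3)
    have h1 : m + 3 + j + 1 = j + m + 4 := by omega
    rw [h1] at h
    have hc : ((j + m + 4).choose j : ℚ) ≠ 0 := by
      have := Nat.choose_pos (show j ≤ j + m + 4 by omega); positivity
    have hf : ((j + m + 4).factorial : ℚ) ≠ 0 := by
      have := Nat.factorial_pos (j+m+4); positivity
    rw [div_eq_div_iff (by positivity) hf]
    push_cast [← h]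
    ring
  | succ i ih =>
    intro m
    set gm : ℕ → ℚ := fun k => (-1 : ℚ) ^ k * (i.choose k) / (((k : ℚ) + m + 4) * ((k + j + m + 4).choose j)) with hgm
    set gm1 : ℕ → ℚ := fun k => (-1 : ℚ) ^ k * (i.choose k) / (((k : ℚ) + ((m+1 : ℕ) : ℚ) + 4) * ((k + j + (m+1) + 4).choose j)) with hgm1
    have htop : gm (i+1) = 0 := by simp [hgm]
    have key : ∑ k ∈ Finset.range (i + 1 + 1),
        (-1 : ℚ) ^ k * ((i+1).choose k) / (((k : ℚ) + m + 4) * ((k + j + m + 4).choose j)) =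
        (∑ k ∈ Finset.range (i + 1), gm k) - ∑ k ∈ Finset.range (i + 1), gm1 k := by
      rw [Finset.sum_range_succ']
      have hterm : ∀ k ∈ Finset.range (i+1),
          (-1 : ℚ) ^ (k+1) * ((i+1).choose (k+1)) /
            (((((k+1 : ℕ)) : ℚ) + m + 4) * ((((k+1) + j + m + 4).choose j) : ℚ)) = gm (k+1) - gm1 k := by
        intro k _
        simp only [hgm, hgm1]
        have harg : k + j + (m+1) + 4 = k + 1 + j + m + 4 := by omega
        rw [harg, Nat.choose_succ_succ i k]
        have hc : ((k + 1 + j + m + 4).choose j : ℚ) ≠ 0 := by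
          have := Nat.choose_pos (show j ≤ k + 1 + j + m + 4 by omega); positivity
        have hd1 : ((k:ℚ) + 1 + m + 4) ≠ 0 := by positivity
        have hd2 : ((k:ℚ) + (m+1) + 4) ≠ 0 := by positivity
        push_cast
        field_simp
        ring
      rw [Finset.sum_congr rfl hterm, Finset.sum_sub_distrib]
      have hshift : ∑ k ∈ Finset.range (i + 1), gm (k+1) + gm 0 = ∑ k ∈ Finset.range (i+1+1), gm k :=
        (Finset.sum_range_succ' gm (i+1)).symm
      have h0 : (-1 : ℚ) ^ 0 * (((i+1).choose 0) : ℚ) /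
          (((((0 : ℕ)) : ℚ) + m + 4) * (((0 + j + m + 4).choose j) : ℚ)) = gm 0 := by
        simp [hgm]
      rw [h0]
      have hs : ∑ k ∈ Finset.range (i+1), gm (k+1) = ∑ k ∈ Finset.range (i+1), gm k - gm 0 := by
        have h2 := Finset.sum_range_succ' gm (i+1)
        rw [Finset.sum_range_succ, htop] at h2
        linarith
      rw [hs]
      ring
    rw [key, ih m, ih (m+1)]
    have e1 : i + j + (m+1) + 4 = (i+j+m+4)+1 := by omega
    have e2 : i + 1 + j + m + 4 = (i+j+m+4)+1 := by omega
    have e3 : i + 1 + j = (i+j)+1 := by omega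
    rw [e1, e2, e3, Nat.factorial_succ ((i+j+m+4)), Nat.factorial_succ (i+j),
      Nat.factorial_succ (m+3)]
    have hf : ((i+j+m+4).factorial : ℚ) ≠ 0 := by
      have := Nat.factorial_pos (i+j+m+4); positivity
    have hn : ((i:ℚ)+j+m+4+1) ≠ 0 := by positivity
    push_cast
    field_simp
    ring

theorem stmt10 (i j : ℕ) :
    ∑ k ∈ Finset.range (i + 1),
      (-1 : ℚ) ^ k * (i.choose k) / ((k + 4) * ((k + j + 4).choose j)) =
      6 / (((i : ℚ) + j + 4) * (i + j + 3) * (i + j + 2) * (i + j + 1)) := by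
  have h := aux j i 0
  simp only [Nat.cast_zero, add_zero, Nat.add_zero,
    show Nat.factorial (0+3) = 6 from rfl] at h
  rw [h]
  have hfact : (i+j+4).factorial = (i+j+4)*((i+j+3)*((i+j+2)*((i+j+1)*(i+j).factorial))) := by
    rw [show i+j+4 = (i+j+3)+1 by omega, Nat.factorial_succ,
        show i+j+3 = (i+j+2)+1 by omega, Nat.factorial_succ,
        show i+j+2 = (i+j+1)+1 by omega, Nat.factorial_succ,
        show i+j+1 = (i+j)+1 by omega, Nat.factorial_succ]
  rw [hfact]
  have hf : ((i+j).factorial : ℚ) ≠ 0 := by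
    have := Nat.factorial_pos (i+j); positivity
  push_cast
  rw [div_eq_div_iff (by positivity) (by positivity)]
  ring
end
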